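/- There is a Borel 2-coloring of increasing triples of reals with no perfect homogeneous set: coloring a triple x < y < z of elements of 2^ω red if Δ(x,y) < Δ(y,z) and blue otherwise, every perfect subset P of 2^ω contains triples of both colors. -/
import Mathlib


/-- Δ(x,y): the least coordinate where x and y differ. -/
noncomputable def Delta (x y : ℕ → Bool) : ℕ := sInf {n | x n ≠ y n}

/-- Lexicographic (strict) order on Cantor space 2^ω. -/
def LexLT (x y : ℕ → Bool) : Prop :=
  x ≠ y ∧ x (Delta x y) = false ∧ y (Delta x y) = true

/-- A strongly increasing sequence in 2^ω. -/
def StronglyInc (x : ℕ → (ℕ → Bool)) : Prop :=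
  (∀ n, LexLT (x n) (x (n + 1))) ∧
    ∀ n m, n < m → Delta (x n) (x (n + 1)) < Delta (x m) (x (m + 1))

/-- A (downward-closed, nonempty) subtree of 2^{<ω}. -/
def IsTree (T : Set (List Bool)) : Prop :=
  T.Nonempty ∧ ∀ s ∈ T, ∀ t, t <+: s → t ∈ T

/-- A perfect tree: every node has two incomparable extensions in T. -/
def IsPerfectTree (T : Set (List Bool)) : Prop :=
  IsTree T ∧ ∀ s ∈ T, ∃ t₁ ∈ T, ∃ t₂ ∈ T,
    s <+: t₁ ∧ s <+: t₂ ∧ ¬ t₁ <+: t₂ ∧ ¬ t₂ <+: t₁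

/-- x ∈ 2^ω is a branch of T if all its finite initial segments lie in T. -/
def IsBranch (T : Set (List Bool)) (x : ℕ → Bool) : Prop :=
  ∀ n, (List.ofFn fun i : Fin n => x i) ∈ T

/-- A splitting node of T. -/
def Splits (T : Set (List Bool)) (s : List Bool) : Prop :=
  s ∈ T ∧ s ++ [false] ∈ T ∧ s ++ [true] ∈ T

/-- The n-th level of T. -/
def Level (T : Set (List Bool)) (n : ℕ) : Set (List Bool) :=
  {s ∈ T | s.length = n}

lemma delta_mem {x y : ℕ → Bool} (h : x ≠ y) :
    x (Delta x y) ≠ y (Delta x y) :=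
  Nat.sInf_mem (Function.ne_iff.mp h)

lemma delta_agree {x y : ℕ → Bool} {k : ℕ} (hk : k < Delta x y) : x k = y k := by
  have := Nat.notMem_of_lt_sInf hk
  simpa using this

lemma delta_comm (x y : ℕ → Bool) : Delta x y = Delta y x := by
  unfold Delta
  congr 1
  ext n
  exact ne_comm

lemma delta_eq {x y : ℕ → Bool} {n : ℕ} (h1 : ∀ k < n, x k = y k)
    (h2 : x n ≠ y n) : Delta x y = n := by
  refine le_antisymm (Nat.sInf_le h2) ?_
  by_contra hlt
  push_neg at hlt
  exact delta_mem (fun he => h2 (congrFun he n)) (h1 _ hlt)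

lemma lexlt_total {x y : ℕ → Bool} (h : x ≠ y) : LexLT x y ∨ LexLT y x := by
  have hd := delta_mem h
  cases hx : x (Delta x y) with
  | false =>
      left
      refine ⟨h, hx, ?_⟩
      revert hd
      cases y (Delta x y) <;> simp [hx]
  | true =>
      right
      have hc : Delta y x = Delta x y := (delta_comm x y).symm
      have hy : y (Delta x y) = false := by
        revert hd
        cases y (Delta x y) <;> simp [hx]
      exact ⟨h.symm, by rw [hc]; exact hy, by rw [hc]; exact hx⟩

lemma perfect_nearby {P : Set (ℕ → Bool)} (hP : Perfect P) {p : ℕ → Bool}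
    (hp : p ∈ P) (n : ℕ) : ∃ q ∈ P, q ≠ p ∧ ∀ i < n, q i = p i := by
  have hacc := hP.acc p hp
  rw [accPt_iff_nhds] at hacc
  have hU : IsOpen {q : ℕ → Bool | ∀ i < n, q i = p i} := by
    have he : {q : ℕ → Bool | ∀ i < n, q i = p i} =
        Set.pi (↑(Finset.range n)) (fun i => {p i}) := by
      ext q
      simp [Set.mem_pi]
    rw [he]
    exact isOpen_set_pi (Finset.range n).finite_toSet (fun i _ => isOpen_discrete _)
  have hmem : {q : ℕ → Bool | ∀ i < n, q i = p i} ∈ nhds p :=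
    hU.mem_nhds (fun i _ => rfl)
  obtain ⟨q, ⟨hq1, hq2⟩, hq3⟩ := hacc _ hmem
  exact ⟨q, hq2, hq3, hq1⟩


lemma triples_of_lt {P : Set (ℕ → Bool)} (hP : Perfect P) {a b : ℕ → Bool}
    (haP : a ∈ P) (hbP : b ∈ P) (hab : LexLT a b) :
    (∃ x ∈ P, ∃ y ∈ P, ∃ z ∈ P,
        LexLT x y ∧ LexLT y z ∧ Delta x y < Delta y z) ∧
    (∃ x ∈ P, ∃ y ∈ P, ∃ z ∈ P,
        LexLT x y ∧ LexLT y z ∧ ¬ Delta x y < Delta y z) := by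
  obtain ⟨hne, ha, hb⟩ := hab
  set n := Delta a b with hn
  have agree : ∀ k < n, a k = b k := fun k hk => delta_agree hk
  constructor
  · -- red: split above b
    obtain ⟨c, hcP, hcb, hagree⟩ := perfect_nearby hP hbP (n + 1)
    have hbc : b ≠ c := fun e => hcb e.symm
    have hbc_gt : n < Delta b c := by
      by_contra hle
      push_neg at hle
      exact delta_mem hbc (hagree _ (Nat.lt_succ_of_le hle)).symm
    obtain h1 | h1 := lexlt_total hbc
    · exact ⟨a, haP, b, hbP, c, hcP, ⟨hne, ha, hb⟩, h1, hbc_gt⟩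
    · -- c < b : use triple a, c, b
      have hcn : c n = true := (hagree n (Nat.lt_succ_self n)).trans hb
      have hac_ne : a n ≠ c n := by rw [ha, hcn]; simp
      have hac : Delta a c = n :=
        delta_eq (fun k hk => (agree k hk).trans
          (hagree k (hk.trans (Nat.lt_succ_self n))).symm) hac_ne
      have hlac : LexLT a c :=
        ⟨fun e => hac_ne (congrFun e n), by rw [hac]; exact ha, by rw [hac]; exact hcn⟩
      refine ⟨a, haP, c, hcP, b, hbP, hlac, h1, ?_⟩
      rw [hac, delta_comm c b]
      exact hbc_gt
  · -- blue: split above a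
    obtain ⟨c, hcP, hca, hagree⟩ := perfect_nearby hP haP (n + 1)
    have hac : a ≠ c := fun e => hca e.symm
    have hac_gt : n < Delta a c := by
      by_contra hle
      push_neg at hle
      exact delta_mem hac (hagree _ (Nat.lt_succ_of_le hle)).symm
    have hcn : c n = false := (hagree n (Nat.lt_succ_self n)).trans ha
    have hcb_ne : c n ≠ b n := by rw [hcn, hb]; simp
    have hcb : Delta c b = n :=
      delta_eq (fun k hk =>
        ((hagree k (hk.trans (Nat.lt_succ_self n))).trans (agree k hk))) hcb_ne
    have hlcb : LexLT c b :=
      ⟨fun e => hcb_ne (congrFun e n), by rw [hcb]; exact hcn, by rw [hcb]; exact hb⟩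
    obtain h1 | h1 := lexlt_total hac
    · refine ⟨a, haP, c, hcP, b, hbP, h1, hlcb, ?_⟩
      rw [hcb]
      omega
    · refine ⟨c, hcP, a, haP, b, hbP, h1, ⟨hne, ha, hb⟩, ?_⟩
      rw [delta_comm c a]
      omega

/-- The Borel coloring of increasing triples by whether Δ(x,y) < Δ(y,z) has
no perfect homogeneous set: every nonempty perfect subset of 2^ω contains
increasing triples of both colors. -/
theorem no_perfect_homogeneous_for_triples (P : Set (ℕ → Bool))
    (hP : Perfect P) (hne : P.Nonempty) :
    (∃ x ∈ P, ∃ y ∈ P, ∃ z ∈ P,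
        LexLT x y ∧ LexLT y z ∧ Delta x y < Delta y z) ∧
    (∃ x ∈ P, ∃ y ∈ P, ∃ z ∈ P,
        LexLT x y ∧ LexLT y z ∧ ¬ Delta x y < Delta y z) := by
  obtain ⟨p, hp⟩ := hne
  obtain ⟨q, hq, hqp, -⟩ := perfect_nearby hP hp 0
  obtain hab | hab := lexlt_total hqp
  · exact triples_of_lt hP hq hp hab
  · exact triples_of_lt hP hp hq hab
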